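/- If a randomized 3-selection mechanism with predictions is impartial, α-consistent, and β-robust, then β ≤ 4/5, 4α + 3β ≤ 6, and 4α + 21β ≤ 20. -/

import Mathlib

/-
Take five vertices and the prediction `Ŝ = {0, 1, 2}`; in `outStar v` the vertex `v` votes
for all others. If `u ≠ v` vote for sets avoiding themselves, all indegrees
are at most `2` and those of `u`, `v` at most `1`, so the selected indegree is at most
`2 · 3 - p_u - p_v`; by impartiality `p_u` and `p_v` are what `u` and `v` receive when only the
other one votes. In `outStar u ∪ outStar v` we have `Δ₃ = 6`, so
`p_u(outStar v) + p_v(outStar u) ≤ 6 - 6β`, and `≤ 6 - 6α` when `Ŝ` is optimal there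
(`{u, v} = {3, 4}`). With `u ∈ Ŝ` and `w ∉ Ŝ` voting for `Ŝ`, `Ŝ` is optimal with `Δ₃ = 5`, so
`p_u(w → Ŝ) + p_w(outStar u) ≤ 6 - 5α`. On a single star, and on `w → Ŝ`, `Δ₃ = 3` and robustness
or consistency bounds the total probability of the voted-for vertices from below; adding these
lower bounds and pairing their terms against the upper bounds gives the three inequalities.
-/

/-- `E` has no self-loops. -/
def NoLoops {n : ℕ} (E : Finset (Fin n × Fin n)) : Prop := ∀ i, (i, i) ∉ E

/-- The indegree of vertex `i` in the graph with edge set `E`. -/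
def indeg {n : ℕ} (E : Finset (Fin n × Fin n)) (i : Fin n) : ℕ :=
  (E.filter (fun e => e.2 = i)).card

/-- The total indegree of a set `S` of vertices. -/
def indegS {n : ℕ} (E : Finset (Fin n × Fin n)) (S : Finset (Fin n)) : ℕ :=
  ∑ i ∈ S, indeg E i

/-- `Δ_k(G)`: the maximum total indegree of a set of `k` vertices. -/
def maxDeg {n : ℕ} (k : ℕ) (E : Finset (Fin n × Fin n)) : ℕ :=
  (Finset.powersetCard k Finset.univ).sup (indegS E)

/-- A (randomized) selection mechanism with predictions: for each `n`,
given a predicted set and a graph, it assigns a selection probability to each vertex. -/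
abbrev Mech : Type :=
  ∀ n : ℕ, Finset (Fin n) → Finset (Fin n × Fin n) → Fin n → ℝ

/-- The probabilities lie in `[0,1]` and sum to at most `k` on every valid input. -/
def ValidMech (k : ℕ) (f : Mech) : Prop :=
  ∀ (n : ℕ) (Sh : Finset (Fin n)) (E : Finset (Fin n × Fin n)),
    Sh.card = k → NoLoops E →
      (∀ i, 0 ≤ f n Sh E i ∧ f n Sh E i ≤ 1) ∧ (∑ i, f n Sh E i) ≤ (k : ℝ)

/-- Impartiality: the probability of selecting `i` does not depend on `i`'s outgoing edges. -/
def Impartial (k : ℕ) (f : Mech) : Prop :=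
  ∀ (n : ℕ) (Sh : Finset (Fin n)) (E E' : Finset (Fin n × Fin n)) (i : Fin n),
    Sh.card = k → NoLoops E → NoLoops E' →
    E.filter (fun e => e.1 ≠ i) = E'.filter (fun e => e.1 ≠ i) →
    f n Sh E i = f n Sh E' i

/-- `α`-consistency: an `α`-approximation whenever the prediction is accurate. -/
def Consistent (k : ℕ) (α : ℝ) (f : Mech) : Prop :=
  ∀ (n : ℕ) (Sh : Finset (Fin n)) (E : Finset (Fin n × Fin n)),
    Sh.card = k → NoLoops E → indegS E Sh = maxDeg k E →
    α * (maxDeg k E : ℝ) ≤ ∑ i, f n Sh E i * (indeg E i : ℝ)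

/-- `β`-robustness: a `β`-approximation regardless of the prediction. -/
def Robust (k : ℕ) (β : ℝ) (f : Mech) : Prop :=
  ∀ (n : ℕ) (Sh : Finset (Fin n)) (E : Finset (Fin n × Fin n)),
    Sh.card = k → NoLoops E →
    β * (maxDeg k E : ℝ) ≤ ∑ i, f n Sh E i * (indeg E i : ℝ)

open Finset

section Graphs

variable {n k : ℕ}

def outEdges (v : Fin n) (T : Finset (Fin n)) : Finset (Fin n × Fin n) :=
  T.image (Prod.mk v)

theorem mem_outEdges {v : Fin n} {T : Finset (Fin n)} {e : Fin n × Fin n} :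
    e ∈ outEdges v T ↔ e.1 = v ∧ e.2 ∈ T := by
  obtain ⟨a, b⟩ := e
  simp only [outEdges, mem_image, Prod.mk.injEq]
  constructor
  · rintro ⟨t, ht, rfl, rfl⟩; exact ⟨rfl, ht⟩
  · rintro ⟨rfl, hb⟩; exact ⟨b, hb, rfl, rfl⟩

theorem noLoops_outEdges {v : Fin n} {T : Finset (Fin n)} (hv : v ∉ T) :
    NoLoops (outEdges v T) := fun i hi => by
  rw [mem_outEdges] at hi
  exact hv (hi.1 ▸ hi.2)

theorem NoLoops.union {E E' : Finset (Fin n × Fin n)} (hE : NoLoops E) (hE' : NoLoops E') :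
    NoLoops (E ∪ E') := fun i hi => (mem_union.1 hi).elim (hE i) (hE' i)

theorem indeg_outEdges (v : Fin n) (T : Finset (Fin n)) (i : Fin n) :
    indeg (outEdges v T) i = if i ∈ T then 1 else 0 := by
  have : (outEdges v T).filter (fun e => e.2 = i) = if i ∈ T then {(v, i)} else ∅ := by
    ext e
    split_ifs with hi <;> simp [mem_outEdges, Prod.ext_iff] <;> grind
  rw [indeg, this]
  split_ifs <;> rfl

theorem indeg_union_le (E E' : Finset (Fin n × Fin n)) (i : Fin n) :
    indeg (E ∪ E') i ≤ indeg E i + indeg E' i := by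
  simpa only [indeg, filter_union] using card_union_le _ _

theorem sum_mul_indeg_outEdges (x : Fin n → ℝ) (v : Fin n) (T : Finset (Fin n)) :
    ∑ i, x i * indeg (outEdges v T) i = ∑ i ∈ T, x i := by
  simp [indeg_outEdges, sum_ite_mem]

theorem Impartial.apply_outEdges_union {f : Mech} (himp : Impartial k f) {Sh : Finset (Fin n)}
    (hS : Sh.card = k) {v : Fin n} {T : Finset (Fin n)} {E : Finset (Fin n × Fin n)}
    (hvT : v ∉ T) (hE : NoLoops E) (hEv : ∀ e ∈ E, e.1 ≠ v) :
    f n Sh (outEdges v T ∪ E) v = f n Sh E v := by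
  refine himp n Sh _ _ v hS ((noLoops_outEdges hvT).union hE) hE ?_
  rw [filter_union, filter_true_of_mem hEv, filter_false_of_mem, empty_union]
  intro e he
  simpa using (mem_outEdges.1 he).1

theorem ValidMech.sum_mul_indeg_le {f : Mech} (hvalid : ValidMech k f) {Sh : Finset (Fin n)}
    (hS : Sh.card = k) {E : Finset (Fin n × Fin n)} (hE : NoLoops E)
    (hdeg : ∀ i, indeg E i ≤ 2) {u v : Fin n} (huv : u ≠ v)
    (hu : indeg E u ≤ 1) (hv : indeg E v ≤ 1) :
    ∑ i, f n Sh E i * indeg E i ≤ 2 * k - f n Sh E u - f n Sh E v := by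
  obtain ⟨hbound, hsum⟩ := hvalid n Sh E hS hE
  have hle (i : Fin n) :
      (indeg E i : ℝ) ≤ 2 - (if i = u then 1 else 0) - (if i = v then 1 else 0) := by
    have hi : (indeg E i : ℝ) ≤ 2 := by exact_mod_cast hdeg i
    have hu' : (indeg E u : ℝ) ≤ 1 := by exact_mod_cast hu
    have hv' : (indeg E v : ℝ) ≤ 1 := by exact_mod_cast hv
    split_ifs with hiu hiv hiv
    · exact absurd (hiu ▸ hiv) huv
    all_goals subst_vars; linarith
  calc ∑ i, f n Sh E i * indeg E i
      ≤ ∑ i, f n Sh E i * (2 - (if i = u then 1 else 0) - (if i = v then 1 else 0)) :=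
        sum_le_sum fun i _ => mul_le_mul_of_nonneg_left (hle i) (hbound i).1
    _ = 2 * ∑ i, f n Sh E i - f n Sh E u - f n Sh E v := by
        simp only [mul_sub, sum_sub_distrib, mul_ite, mul_one, mul_zero, sum_ite_eq',
          mem_univ, if_true, ← sum_mul]
        ring
    _ ≤ 2 * k - f n Sh E u - f n Sh E v := by linarith

theorem sum_mul_indeg_outEdges_union_le {f : Mech} (hvalid : ValidMech k f)
    (himp : Impartial k f) {Sh : Finset (Fin n)} (hS : Sh.card = k) {u v : Fin n}
    {T U : Finset (Fin n)} (huv : u ≠ v) (huT : u ∉ T) (hvU : v ∉ U) :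
    ∑ i, f n Sh (outEdges u T ∪ outEdges v U) i * indeg (outEdges u T ∪ outEdges v U) i ≤
      2 * k - f n Sh (outEdges v U) u - f n Sh (outEdges u T) v := by
  have hoff {a b : Fin n} {A : Finset (Fin n)} (hab : a ≠ b) : ∀ e ∈ outEdges a A, e.1 ≠ b :=
    fun e he => (mem_outEdges.1 he).1 ▸ hab
  have hdeg (i : Fin n) : indeg (outEdges u T ∪ outEdges v U) i ≤
      (if i ∈ T then 1 else 0) + (if i ∈ U then 1 else 0) := by
    simpa only [indeg_outEdges] using indeg_union_le (outEdges u T) (outEdges v U) i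
  have hG := hvalid.sum_mul_indeg_le hS ((noLoops_outEdges huT).union (noLoops_outEdges hvU))
    (fun i => (hdeg i).trans (by split_ifs <;> norm_num)) huv
    ((hdeg u).trans (by rw [if_neg huT]; split_ifs <;> norm_num))
    ((hdeg v).trans (by rw [if_neg hvU]; split_ifs <;> norm_num))
  have hu : f n Sh (outEdges u T ∪ outEdges v U) u = f n Sh (outEdges v U) u :=
    himp.apply_outEdges_union hS huT (noLoops_outEdges hvU) (hoff huv.symm)
  have hv : f n Sh (outEdges u T ∪ outEdges v U) v = f n Sh (outEdges u T) v := by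
    rw [union_comm]
    exact himp.apply_outEdges_union hS hvU (noLoops_outEdges huT) (hoff huv)
  rwa [hu, hv] at hG

def outStar (v : Fin n) : Finset (Fin n × Fin n) := outEdges v (univ.erase v)

theorem noLoops_outStar (v : Fin n) : NoLoops (outStar v) :=
  noLoops_outEdges (notMem_erase v univ)

end Graphs

def predicted : Finset (Fin 5) := {0, 1, 2}

theorem card_predicted : predicted.card = 3 := rfl

theorem sum_predicted {M : Type*} [AddCommMonoid M] (x : Fin 5 → M) :
    ∑ i ∈ predicted, x i = x 0 + x 1 + x 2 := by
  simp [predicted, add_assoc]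

theorem maxDeg_outStar (v : Fin 5) : maxDeg 3 (outStar v) = 3 := by revert v; decide

theorem indegS_outStar_predicted {v : Fin 5} (hv : v ∉ predicted) :
    indegS (outStar v) predicted = 3 := by revert v; decide

theorem maxDeg_outEdges_predicted (w : Fin 5) : maxDeg 3 (outEdges w predicted) = 3 := by
  revert w; decide

theorem indegS_outEdges_predicted (w : Fin 5) : indegS (outEdges w predicted) predicted = 3 := by
  revert w; decide

theorem maxDeg_outStar_union_outStar {u v : Fin 5} (huv : u ≠ v) :
    maxDeg 3 (outStar u ∪ outStar v) = 6 := by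
  revert u v; decide

theorem indegS_outStar_union_outStar_predicted {u v : Fin 5} (hu : u ∉ predicted)
    (hv : v ∉ predicted) (huv : u ≠ v) : indegS (outStar u ∪ outStar v) predicted = 6 := by
  revert u v; decide

theorem maxDeg_outStar_union_outEdges_predicted {u w : Fin 5} (hu : u ∈ predicted)
    (hw : w ∉ predicted) : maxDeg 3 (outStar u ∪ outEdges w predicted) = 5 := by
  revert u w; decide

theorem indegS_outStar_union_outEdges_predicted {u w : Fin 5} (hu : u ∈ predicted)
    (hw : w ∉ predicted) : indegS (outStar u ∪ outEdges w predicted) predicted = 5 := by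
  revert u w; decide

section FiveVertices

variable {f : Mech} {α β : ℝ}

theorem Robust.le_sum_outStar (hrob : Robust 3 β f) (v : Fin 5) :
    3 * β ≤ ∑ i ∈ univ.erase v, f 5 predicted (outStar v) i := by
  have h := hrob 5 predicted (outStar v) card_predicted (noLoops_outStar v)
  rwa [maxDeg_outStar, outStar, sum_mul_indeg_outEdges, Nat.cast_ofNat, mul_comm] at h

theorem Consistent.le_sum_outStar (hcons : Consistent 3 α f) {v : Fin 5} (hv : v ∉ predicted) :
    3 * α ≤ ∑ i ∈ univ.erase v, f 5 predicted (outStar v) i := by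
  have h := hcons 5 predicted (outStar v) card_predicted (noLoops_outStar v)
    (by rw [indegS_outStar_predicted hv, maxDeg_outStar])
  rwa [maxDeg_outStar, outStar, sum_mul_indeg_outEdges, Nat.cast_ofNat, mul_comm] at h

theorem Consistent.le_sum_outEdges (hcons : Consistent 3 α f) {w : Fin 5} (hw : w ∉ predicted) :
    3 * α ≤ ∑ i ∈ predicted, f 5 predicted (outEdges w predicted) i := by
  have h := hcons 5 predicted _ card_predicted (noLoops_outEdges hw)
    (by rw [indegS_outEdges_predicted, maxDeg_outEdges_predicted])
  rwa [maxDeg_outEdges_predicted, sum_mul_indeg_outEdges, Nat.cast_ofNat, mul_comm] at h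

theorem Robust.outStar_pair_le (hvalid : ValidMech 3 f) (himp : Impartial 3 f)
    (hrob : Robust 3 β f) {u v : Fin 5} (huv : u ≠ v) :
    f 5 predicted (outStar v) u + f 5 predicted (outStar u) v ≤ 6 - 6 * β := by
  have hlow := hrob 5 predicted _ card_predicted ((noLoops_outStar u).union (noLoops_outStar v))
  have hup := sum_mul_indeg_outEdges_union_le hvalid himp card_predicted huv
    (notMem_erase u univ) (notMem_erase v univ)
  rw [maxDeg_outStar_union_outStar huv] at hlow
  simp only [outStar] at hlow hup ⊢
  push_cast at hlow hup
  linarith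

theorem Consistent.outStar_pair_le (hvalid : ValidMech 3 f) (himp : Impartial 3 f)
    (hcons : Consistent 3 α f) {u v : Fin 5} (hu : u ∉ predicted) (hv : v ∉ predicted)
    (huv : u ≠ v) :
    f 5 predicted (outStar v) u + f 5 predicted (outStar u) v ≤ 6 - 6 * α := by
  have hlow := hcons 5 predicted _ card_predicted
    ((noLoops_outStar u).union (noLoops_outStar v))
    (by rw [indegS_outStar_union_outStar_predicted hu hv huv, maxDeg_outStar_union_outStar huv])
  have hup := sum_mul_indeg_outEdges_union_le hvalid himp card_predicted huv
    (notMem_erase u univ) (notMem_erase v univ)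
  rw [maxDeg_outStar_union_outStar huv] at hlow
  simp only [outStar] at hlow hup ⊢
  push_cast at hlow hup
  linarith

theorem Consistent.outStar_outEdges_pair_le (hvalid : ValidMech 3 f) (himp : Impartial 3 f)
    (hcons : Consistent 3 α f) {u w : Fin 5} (hu : u ∈ predicted) (hw : w ∉ predicted) :
    f 5 predicted (outEdges w predicted) u + f 5 predicted (outStar u) w ≤ 6 - 5 * α := by
  have huw : u ≠ w := fun h => hw (h ▸ hu)
  have hlow := hcons 5 predicted _ card_predicted
    ((noLoops_outStar u).union (noLoops_outEdges hw))
    (by rw [indegS_outStar_union_outEdges_predicted hu hw,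
      maxDeg_outStar_union_outEdges_predicted hu hw])
  have hup := sum_mul_indeg_outEdges_union_le hvalid himp card_predicted huw
    (notMem_erase u univ) hw
  rw [maxDeg_outStar_union_outEdges_predicted hu hw] at hlow
  simp only [outStar] at hlow hup ⊢
  push_cast at hlow hup
  linarith

theorem Robust.le_four_fifths (hvalid : ValidMech 3 f) (himp : Impartial 3 f)
    (hrob : Robust 3 β f) : β ≤ 4 / 5 := by
  have hstar := hrob.le_sum_outStar
  simp only [sum_erase_eq_sub (mem_univ _), Fin.sum_univ_five] at hstar
  have hpair (u v : Fin 5) (huv : u ≠ v) := hrob.outStar_pair_le hvalid himp huv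
  linarith [hstar 0, hstar 1, hstar 2, hstar 3, hstar 4, hpair 0 1 (by decide),
    hpair 0 2 (by decide), hpair 0 3 (by decide), hpair 0 4 (by decide), hpair 1 2 (by decide),
    hpair 1 3 (by decide), hpair 1 4 (by decide), hpair 2 3 (by decide), hpair 2 4 (by decide),
    hpair 3 4 (by decide)]

theorem Consistent.four_mul_add_three_mul_le_six (hvalid : ValidMech 3 f) (himp : Impartial 3 f)
    (hcons : Consistent 3 α f) (hrob : Robust 3 β f) : 4 * α + 3 * β ≤ 6 := by
  have hstar := hrob.le_sum_outStar
  have hfan (w : Fin 5) (hw : w ∉ predicted) := hcons.le_sum_outEdges hw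
  simp only [sum_erase_eq_sub (mem_univ _), Fin.sum_univ_five] at hstar
  simp only [sum_predicted] at hfan
  have hpair (u v : Fin 5) (huv : u ≠ v) := hrob.outStar_pair_le hvalid himp huv
  have hmixed (u w : Fin 5) (hu : u ∈ predicted) (hw : w ∉ predicted) :=
    hcons.outStar_outEdges_pair_le hvalid himp hu hw
  linarith [hstar 0, hstar 1, hstar 2, hfan 3 (by decide), hfan 4 (by decide),
    hpair 0 1 (by decide), hpair 0 2 (by decide), hpair 1 2 (by decide),
    hmixed 0 3 (by decide) (by decide), hmixed 0 4 (by decide) (by decide),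
    hmixed 1 3 (by decide) (by decide), hmixed 1 4 (by decide) (by decide),
    hmixed 2 3 (by decide) (by decide), hmixed 2 4 (by decide) (by decide)]

theorem Consistent.four_mul_add_twentyOne_mul_le_twenty (hvalid : ValidMech 3 f)
    (himp : Impartial 3 f) (hcons : Consistent 3 α f) (hrob : Robust 3 β f) :
    4 * α + 21 * β ≤ 20 := by
  have hstar := hrob.le_sum_outStar
  have hstar' (v : Fin 5) (hv : v ∉ predicted) := hcons.le_sum_outStar hv
  simp only [sum_erase_eq_sub (mem_univ _), Fin.sum_univ_five] at hstar hstar'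
  have hpair (u v : Fin 5) (huv : u ≠ v) := hrob.outStar_pair_le hvalid himp huv
  linarith [hstar 0, hstar 1, hstar 2, hstar' 3 (by decide), hstar' 4 (by decide),
    hpair 0 1 (by decide), hpair 0 2 (by decide), hpair 0 3 (by decide), hpair 0 4 (by decide),
    hpair 1 2 (by decide), hpair 1 3 (by decide), hpair 1 4 (by decide), hpair 2 3 (by decide),
    hpair 2 4 (by decide),
    hcons.outStar_pair_le hvalid himp (u := 3) (v := 4) (by decide) (by decide) (by decide)]

end FiveVertices

theorem upper_bound_three_selection_general (α β : ℝ) (f : Mech)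
    (hvalid : ValidMech 3 f) (himp : Impartial 3 f)
    (hcons : Consistent 3 α f) (hrob : Robust 3 β f) :
    β ≤ 4 / 5 ∧ 4 * α + 3 * β ≤ 6 ∧ 4 * α + 21 * β ≤ 20 :=
  ⟨hrob.le_four_fifths hvalid himp, hcons.four_mul_add_three_mul_le_six hvalid himp hrob,
    hcons.four_mul_add_twentyOne_mul_le_twenty hvalid himp hrob⟩

/-- If a randomized 3-selection mechanism with predictions is impartial, `α`-consistent, and
`β`-robust, then `β ≤ 4/5`, `4α + 3β ≤ 6`, and `4α + 21β ≤ 20`. -/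
theorem upper_bound_three_selection (α β : ℝ) (hα₀ : 0 ≤ α) (hα₁ : α ≤ 1)
    (hβ₀ : 0 ≤ β) (hβ₁ : β ≤ 1) (f : Mech)
    (hvalid : ValidMech 3 f) (himp : Impartial 3 f)
    (hcons : Consistent 3 α f) (hrob : Robust 3 β f) :
    β ≤ 4 / 5 ∧ 4 * α + 3 * β ≤ 6 ∧ 4 * α + 21 * β ≤ 20 :=
  upper_bound_three_selection_general α β f hvalid himp hcons hrob
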